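/- Let H be a complex Hilbert space, let A be a norm-closed subalgebra of B(H) possessing a right contractive approximate identity, and let T be the triple system generated by A in B(H). Let C be the norm closure of the linear span of {x y* : x, y ∈ T}. Then C is a norm-closed *-subalgebra (hence a C*-subalgebra) of B(H), T ⊆ C, and c x ∈ T for every c ∈ C and x ∈ T. Consequently T is a norm-closed left ideal of the C*-algebra C containing A as a closed subalgebra. (This is a concrete form of the existence of the left ideal envelope of an operator algebra with r.c.a.i.) -/

import Mathlib

/-!
Right multiplication by the contractions `e i` is an equicontinuous family, so the elements `x`
with `x * e i → x` form a closed left ideal. It contains `A`, and a left ideal is closed under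
`x y* z`, so by minimality it contains `T`. In a C⋆-algebra the estimate
`‖x e* - x‖² ≤ 2 ‖x‖ ‖x e - x‖` then shows that every `x ∈ T` is the limit of `x * star (e i)`,
which lies in `T T*` because `e i ∈ A ⊆ T`. Everything else is algebra: the span of `T T*` is a
⋆-algebra acting on `T` from the left, and these properties pass to norm closures.
-/

open Filter Topology

section RightApproxUnit

variable (𝕜 : Type*) {A ι : Type*} [NormedField 𝕜] [NonUnitalNormedRing A] [NormedSpace 𝕜 A]
  [IsScalarTower 𝕜 A A] [Preorder ι]

def rightApproxUnitSubmodule (e : ι → A) : Submodule 𝕜 A where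
  carrier := {x | Tendsto (fun i ↦ x * e i) atTop (𝓝 x)}
  zero_mem' := by simpa using tendsto_const_nhds
  add_mem' {x y} hx hy := by
    simpa only [Set.mem_ofPred_eq, add_mul] using Tendsto.add hx hy
  smul_mem' c x hx := by
    simpa only [Set.mem_ofPred_eq, smul_mul_assoc] using Tendsto.const_smul hx c

variable {𝕜} {e : ι → A}

theorem mem_rightApproxUnitSubmodule {x : A} :
    x ∈ rightApproxUnitSubmodule 𝕜 e ↔ Tendsto (fun i ↦ x * e i) atTop (𝓝 x) :=
  Iff.rfl

theorem mul_mem_rightApproxUnitSubmodule (y : A) {x : A}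
    (hx : x ∈ rightApproxUnitSubmodule 𝕜 e) : y * x ∈ rightApproxUnitSubmodule 𝕜 e := by
  simpa only [mem_rightApproxUnitSubmodule, mul_assoc] using hx.const_mul y

theorem isClosed_rightApproxUnitSubmodule (he : ∀ i, ‖e i‖ ≤ 1) :
    IsClosed (rightApproxUnitSubmodule 𝕜 e : Set A) := by
  refine (LipschitzWith.uniformEquicontinuous (fun i x ↦ x * e i) 1 fun i ↦ ?_).equicontinuous
    |>.isClosed_setOfPred_tendsto continuous_id
  refine LipschitzWith.of_dist_le_mul fun x y ↦ ?_
  rw [dist_eq_norm, dist_eq_norm, ← sub_mul, NNReal.coe_one, one_mul]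
  exact (norm_mul_le _ _).trans (mul_le_of_le_one_right (norm_nonneg _) (he i))

end RightApproxUnit

section CStar

variable {A : Type*} [NonUnitalCStarAlgebra A] [PartialOrder A] [StarOrderedRing A]

theorem norm_mul_star_sub_sq_le (a : A) {e : A} (he : ‖e‖ ≤ 1) :
    ‖a * star e - a‖ ^ 2 ≤ 2 * ‖a‖ * ‖a * e - a‖ := by
  set y := (a - a * e) * star a + a * star (a - a * e)
  have hconj : a * (star e * e) * star a ≤ a * star a := by
    refine (CStarAlgebra.star_right_conjugate_le_norm_smul (a := a)).trans
      (smul_le_of_le_one_left (mul_star_self_nonneg a) ?_)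
    rw [CStarRing.norm_star_mul_self, ← sq]
    exact pow_le_one₀ (norm_nonneg e) he
  have hle : (a * star e - a) * star (a * star e - a) ≤ y := by
    calc (a * star e - a) * star (a * star e - a)
        = y + (a * (star e * e) * star a - a * star a) := by
          simp only [y, star_sub, star_mul, star_star]; noncomm_ring
      _ ≤ y := add_le_of_nonpos_right (sub_nonpos.mpr hconj)
  calc ‖a * star e - a‖ ^ 2 = ‖(a * star e - a) * star (a * star e - a)‖ := by
        rw [CStarRing.norm_self_mul_star, sq]
    _ ≤ ‖y‖ := CStarAlgebra.norm_le_norm_of_nonneg_of_le (mul_star_self_nonneg _) hle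
    _ ≤ ‖a - a * e‖ * ‖star a‖ + ‖a‖ * ‖star (a - a * e)‖ :=
        (norm_add_le _ _).trans (add_le_add (norm_mul_le _ _) (norm_mul_le _ _))
    _ = 2 * ‖a‖ * ‖a * e - a‖ := by rw [norm_star, norm_star, norm_sub_rev]; ring

theorem tendsto_mul_star_of_tendsto_mul {ι : Type*} {l : Filter ι} {a : A} {e : ι → A}
    (he : ∀ i, ‖e i‖ ≤ 1) (h : Tendsto (fun i ↦ a * e i) l (𝓝 a)) :
    Tendsto (fun i ↦ a * star (e i)) l (𝓝 a) := by
  rw [tendsto_iff_norm_sub_tendsto_zero] at h ⊢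
  have hbound := (h.const_mul (2 * ‖a‖)).sqrt
  rw [mul_zero, Real.sqrt_zero] at hbound
  refine squeeze_zero (fun _ ↦ norm_nonneg _) (fun i ↦ ?_) hbound
  exact Real.le_sqrt_of_sq_le (norm_mul_star_sub_sq_le a (he i))

end CStar

namespace Submodule

variable {R A : Type*} [CommSemiring R] [NonUnitalSemiring A] [StarRing A] [Module R A]

def mulStarSpan (T : Submodule R A) : Submodule R A :=
  span R {z | ∃ x ∈ T, ∃ y ∈ T, z = x * star y}

variable {T : Submodule R A}

theorem mul_star_mem_mulStarSpan {x y : A} (hx : x ∈ T) (hy : y ∈ T) :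
    x * star y ∈ T.mulStarSpan :=
  subset_span ⟨x, hx, y, hy, rfl⟩

theorem star_mem_mulStarSpan [StarRing R] [StarModule R A] {s : A} (hs : s ∈ T.mulStarSpan) :
    star s ∈ T.mulStarSpan := by
  induction hs using span_induction with
  | mem _ h =>
    obtain ⟨x, hx, y, hy, rfl⟩ := h
    simpa only [star_mul, star_star] using mul_star_mem_mulStarSpan hy hx
  | zero => simp
  | add s t _ _ hs ht => simpa only [star_add] using add_mem hs ht
  | smul c s _ hs => simpa only [star_smul] using smul_mem _ (star c) hs

variable (hT : ∀ x ∈ T, ∀ y ∈ T, ∀ z ∈ T, x * star y * z ∈ T)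
include hT

theorem mulStarSpan_mul_mem [IsScalarTower R A A] {s x : A} (hs : s ∈ T.mulStarSpan)
    (hx : x ∈ T) : s * x ∈ T := by
  refine (span_le (p := T.comap (LinearMap.mulRight R x))).mpr ?_ hs
  rintro _ ⟨y, hy, z, hz, rfl⟩
  exact hT y hy z hz x hx

theorem mul_mem_mulStarSpan [IsScalarTower R A A] [SMulCommClass R A A] {s t : A}
    (hs : s ∈ T.mulStarSpan) (ht : t ∈ T.mulStarSpan) : s * t ∈ T.mulStarSpan := by
  refine (span_le (p := T.mulStarSpan.comap (LinearMap.mulLeft R s))).mpr ?_ ht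
  rintro _ ⟨x, hx, y, hy, rfl⟩
  show s * (x * star y) ∈ T.mulStarSpan
  rw [← mul_assoc]
  exact mul_star_mem_mulStarSpan (mulStarSpan_mul_mem hT hs hx) hy

end Submodule

theorem stmt6_general {H : Type*} [NormedAddCommGroup H] [InnerProductSpace ℂ H] [CompleteSpace H]
    {ι : Type*} [Preorder ι] [IsDirected ι (· ≤ ·)] [Nonempty ι]
    (A : NonUnitalSubalgebra ℂ (H →L[ℂ] H))
    (e : ι → H →L[ℂ] H) (heA : ∀ i, e i ∈ A) (he : ∀ i, ‖e i‖ ≤ 1)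
    (hrcai : ∀ a ∈ A, Tendsto (fun i => ‖a * e i - a‖) atTop (𝓝 0))
    (T : Submodule ℂ (H →L[ℂ] H)) (hTc : IsClosed (T : Set (H →L[ℂ] H)))
    (hAT : (A : Set (H →L[ℂ] H)) ⊆ T)
    (hTtriple : ∀ x ∈ T, ∀ y ∈ T, ∀ z ∈ T, x * star y * z ∈ T)
    (hTmin : ∀ S : Submodule ℂ (H →L[ℂ] H), IsClosed (S : Set (H →L[ℂ] H)) →
      (A : Set (H →L[ℂ] H)) ⊆ S →
      (∀ x ∈ S, ∀ y ∈ S, ∀ z ∈ S, x * star y * z ∈ S) → T ≤ S)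
    (C : Set (H →L[ℂ] H))
    (hC : C = closure (Submodule.span ℂ
      {z : H →L[ℂ] H | ∃ x ∈ T, ∃ y ∈ T, z = x * star y} : Set (H →L[ℂ] H))) :
    (∀ c ∈ C, ∀ d ∈ C, c * d ∈ C) ∧
      (∀ c ∈ C, star c ∈ C) ∧
      (T : Set (H →L[ℂ] H)) ⊆ C ∧
      (∀ c ∈ C, ∀ x ∈ T, c * x ∈ T) := by
  subst hC
  have hT_le : T ≤ rightApproxUnitSubmodule ℂ e :=
    hTmin _ (isClosed_rightApproxUnitSubmodule he)
      (fun a ha ↦ tendsto_iff_norm_sub_tendsto_zero.mpr (hrcai a ha))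
      fun x _ y _ _ hz ↦ mul_mem_rightApproxUnitSubmodule (x * star y) hz
  refine ⟨fun c hc d hd ↦ ?_, fun c hc ↦ ?_, fun x hx ↦ ?_, fun c hc x hx ↦ ?_⟩
  · exact map_mem_closure₂ continuous_mul hc hd fun a ha b hb ↦
      Submodule.mul_mem_mulStarSpan hTtriple ha hb
  · exact map_mem_closure continuous_star hc fun a ha ↦ Submodule.star_mem_mulStarSpan ha
  · exact mem_closure_of_tendsto (tendsto_mul_star_of_tendsto_mul he (hT_le hx))
      (.of_forall fun i ↦ Submodule.mul_star_mem_mulStarSpan hx (hAT (heA i)))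
  · refine hTc.closure_subset <| map_mem_closure (f := (· * x)) (continuous_mul_const x) hc ?_
    exact fun s hs ↦ Submodule.mulStarSpan_mul_mem hTtriple hs hx

/-- Concrete form of the left ideal envelope (§2): if `A ⊆ B(H)` is a norm-closed subalgebra
with a right contractive approximate identity, `T` is the triple system it generates, and
`C` is the closed linear span of `T T*`, then `C` is a C*-subalgebra of `B(H)`, `T ⊆ C`, and
`T` is a closed left ideal of `C` containing `A`. -/
theorem stmt6 {H : Type*} [NormedAddCommGroup H] [InnerProductSpace ℂ H] [CompleteSpace H]
    {ι : Type*} [Preorder ι] [IsDirected ι (· ≤ ·)] [Nonempty ι]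
    (A : NonUnitalSubalgebra ℂ (H →L[ℂ] H)) (hA : IsClosed (A : Set (H →L[ℂ] H)))
    (e : ι → H →L[ℂ] H) (heA : ∀ i, e i ∈ A) (he : ∀ i, ‖e i‖ ≤ 1)
    (hrcai : ∀ a ∈ A, Tendsto (fun i => ‖a * e i - a‖) atTop (𝓝 0))
    (T : Submodule ℂ (H →L[ℂ] H)) (hTc : IsClosed (T : Set (H →L[ℂ] H)))
    (hAT : (A : Set (H →L[ℂ] H)) ⊆ T)
    (hTtriple : ∀ x ∈ T, ∀ y ∈ T, ∀ z ∈ T, x * star y * z ∈ T)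
    (hTmin : ∀ S : Submodule ℂ (H →L[ℂ] H), IsClosed (S : Set (H →L[ℂ] H)) →
      (A : Set (H →L[ℂ] H)) ⊆ S →
      (∀ x ∈ S, ∀ y ∈ S, ∀ z ∈ S, x * star y * z ∈ S) → T ≤ S)
    (C : Set (H →L[ℂ] H))
    (hC : C = closure (Submodule.span ℂ
      {z : H →L[ℂ] H | ∃ x ∈ T, ∃ y ∈ T, z = x * star y} : Set (H →L[ℂ] H))) :
    (∀ c ∈ C, ∀ d ∈ C, c * d ∈ C) ∧
      (∀ c ∈ C, star c ∈ C) ∧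
      (T : Set (H →L[ℂ] H)) ⊆ C ∧
      (∀ c ∈ C, ∀ x ∈ T, c * x ∈ T) :=
  stmt6_general A e heA he hrcai T hTc hAT hTtriple hTmin C hC
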